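/- Let 0 ≤ L < M be integers and let α, β be complex numbers. If 0 < p ≤ 2, then ‖αz^L + βz^M‖_p ≥ B_p · (|α|^p + |β|^p)^{1/p}, where B_p = ((1/2)∫₀¹ |1 - e(t)|^p dt)^{1/p}. -/

import Mathlib

open MeasureTheory

noncomputable def e (t : ℝ) : ℂ := Complex.exp (2 * Real.pi * Complex.I * t)

/-- L_p norm of a polynomial over the unit circle -/
noncomputable def polyLp (p : ℝ) (F : Polynomial ℂ) : ℝ :=
  (∫ t in (0:ℝ)..1, ‖F.eval (e t)‖ ^ p) ^ (1/p)

/-- B_p = ((1/2)∫₀¹ |1 - e(t)|^p dt)^{1/p} -/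
noncomputable def Bp (p : ℝ) : ℝ :=
  ((1/2) * ∫ t in (0:ℝ)..1, ‖1 - e t‖ ^ p) ^ (1/p)

/-! On the circle `|α z^L + β z^M| = |α + β z^(M-L)|`. Writing `α = |α| e(θ)`, `β = |β| e(φ)`, the
substitutions `t ↦ (M - L) t` and `t ↦ t + φ - θ` preserve integrals of 1-periodic functions, so
`‖α z^L + β z^M‖_p^p = ∫ |a + b e(t)|^p` with `a = |α|`, `b = |β|`. Pairing `t` with `t + 1/2`
replaces `e(t)` by `-e(t)`, so it suffices to show, for `|w| = 1`,
`(a^p + b^p) (|1 + w|^p + |1 - w|^p) ≤ 2 (|a + b w|^p + |a - b w|^p)`.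
With `q = p/2 ≤ 1`, `s = a² + b²` and `c = Re w` this is
`(a^(2q) + b^(2q)) ((2 + 2c)^q + (2 - 2c)^q) ≤ 2 ((s + 2abc)^q + (s - 2abc)^q)`, which follows from
the concavity of `x ↦ x^q` in the form "`f (s + d) + f (s - d)` decreases in `|d|`", applied once
to `2ab|c| ≤ s|c|` and once to get `a^(2q) + b^(2q) ≤ 2 (s/2)^q`. -/

open Polynomial

theorem e_add (s t : ℝ) : e (s + t) = e s * e t := by
  simp only [e, Complex.ofReal_add, mul_add, Complex.exp_add]

theorem e_natCast_mul (n : ℕ) (t : ℝ) : e (n * t) = e t ^ n := by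
  rw [e, e, ← Complex.exp_nat_mul]
  push_cast
  ring_nf

theorem e_half : e (1 / 2) = -1 := by
  rw [e, ← Complex.exp_pi_mul_I]
  push_cast
  ring_nf

theorem e_periodic : Function.Periodic e 1 := by
  intro t
  rw [e_add, show e 1 = 1 by simp [e], mul_one]

@[fun_prop]
theorem continuous_e : Continuous e := by
  unfold e
  fun_prop

theorem norm_e (t : ℝ) : ‖e t‖ = 1 := by
  rw [e, Complex.norm_exp]
  simp

theorem norm_mul_e_arg (z : ℂ) : ‖z‖ * e (z.arg / (2 * Real.pi)) = z := by
  conv_rhs => rw [← Complex.norm_mul_exp_arg_mul_I z]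
  rw [e]
  congr 2
  push_cast
  field_simp

section PeriodicIntegral

variable {E : Type*} [NormedAddCommGroup E] [NormedSpace ℝ E] {f : ℝ → E} {T : ℝ}

theorem Function.Periodic.intervalIntegral_comp_natCast_mul (hf : Function.Periodic f T)
    (h_int : ∀ t₁ t₂, IntervalIntegrable f volume t₁ t₂) {k : ℕ} (hk : k ≠ 0) :
    ∫ x in (0 : ℝ)..T, f (k * x) = ∫ x in (0 : ℝ)..T, f x := by
  have hk' : (k : ℝ) ≠ 0 := Nat.cast_ne_zero.mpr hk
  have hrep := hf.intervalIntegral_add_zsmul_eq k 0 h_int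
  simp only [zero_add, natCast_zsmul] at hrep
  rw [intervalIntegral.integral_comp_mul_left f hk', mul_zero, ← nsmul_eq_mul, hrep,
    ← Nat.cast_smul_eq_nsmul ℝ, smul_smul, inv_mul_cancel₀ hk', one_smul]

theorem Function.Periodic.intervalIntegral_comp_add_right (hf : Function.Periodic f T) (c : ℝ) :
    ∫ x in (0 : ℝ)..T, f (x + c) = ∫ x in (0 : ℝ)..T, f x := by
  rw [intervalIntegral.integral_comp_add_right, zero_add, add_comm, hf.intervalIntegral_add_eq c 0,
    zero_add]

theorem intervalIntegral_comp_neg_e (g : ℂ → E) :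
    ∫ t in (0 : ℝ)..1, g (-e t) = ∫ t in (0 : ℝ)..1, g (e t) := by
  simpa only [Function.comp_apply, e_add, e_half, mul_neg_one] using
    (e_periodic.comp g).intervalIntegral_comp_add_right (1 / 2)

end PeriodicIntegral

theorem ConcaveOn.map_add_add_map_sub_le {S : Set ℝ} {f : ℝ → ℝ} (hf : ConcaveOn ℝ S f)
    {s d d' : ℝ} (hplus : s + d' ∈ S) (hminus : s - d' ∈ S) (hdd' : |d| ≤ |d'|) :
    f (s + d') + f (s - d') ≤ f (s + d) + f (s - d) := by
  rcases eq_or_ne d' 0 with rfl | hd'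
  · rw [abs_zero, abs_nonpos_iff] at hdd'
    rw [hdd']
  -- `s ± d` are the convex combinations of `s ± d'` with weights `(1 ± d / d') / 2`.
  have hratio : |d / d'| ≤ 1 := by rwa [abs_div, div_le_one (abs_pos.mpr hd')]
  obtain ⟨hlo, hhi⟩ := abs_le.mp hratio
  have hw₁ : 0 ≤ (1 + d / d') / 2 := by linarith
  have hw₂ : 0 ≤ (1 - d / d') / 2 := by linarith
  have hsum : (1 + d / d') / 2 + (1 - d / d') / 2 = 1 := by ring
  have hplus' := hf.2 hplus hminus hw₁ hw₂ hsum
  have hminus' := hf.2 hplus hminus hw₂ hw₁ (by linarith)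
  have hcomb₁ : (1 + d / d') / 2 * (s + d') + (1 - d / d') / 2 * (s - d') = s + d := by
    field_simp; ring
  have hcomb₂ : (1 - d / d') / 2 * (s + d') + (1 + d / d') / 2 * (s - d') = s - d := by
    field_simp; ring
  simp only [smul_eq_mul, hcomb₁, hcomb₂] at hplus' hminus'
  linarith

theorem sq_rpow_add_sq_rpow_mul_le {q a b c : ℝ} (hq₀ : 0 < q) (hq₁ : q ≤ 1) (ha : 0 ≤ a)
    (hb : 0 ≤ b) (hc : |c| ≤ 1) :
    ((a ^ 2) ^ q + (b ^ 2) ^ q) * ((2 + 2 * c) ^ q + (2 - 2 * c) ^ q)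
      ≤ 2 * ((a ^ 2 + b ^ 2 + 2 * a * b * c) ^ q + (a ^ 2 + b ^ 2 - 2 * a * b * c) ^ q) := by
  have hconc := Real.concaveOn_rpow hq₀.le hq₁
  obtain ⟨hc₁, hc₂⟩ := abs_le.mp hc
  have hs : 0 ≤ a ^ 2 + b ^ 2 := by positivity
  have hmid : (a ^ 2) ^ q + (b ^ 2) ^ q ≤ 2 * ((a ^ 2 + b ^ 2) / 2) ^ q := by
    have := hconc.map_add_add_map_sub_le (s := (a ^ 2 + b ^ 2) / 2) (d := 0)
      (d' := (a ^ 2 - b ^ 2) / 2) (by simp only [Set.mem_Ici]; ring_nf; positivity)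
      (by simp only [Set.mem_Ici]; ring_nf; positivity) (by rw [abs_zero]; positivity)
    rwa [add_zero, sub_zero, ← two_mul,
      show (a ^ 2 + b ^ 2) / 2 + (a ^ 2 - b ^ 2) / 2 = a ^ 2 by ring,
      show (a ^ 2 + b ^ 2) / 2 - (a ^ 2 - b ^ 2) / 2 = b ^ 2 by ring] at this
  have hspread : ((a ^ 2 + b ^ 2) * (1 + c)) ^ q + ((a ^ 2 + b ^ 2) * (1 - c)) ^ q
      ≤ (a ^ 2 + b ^ 2 + 2 * a * b * c) ^ q + (a ^ 2 + b ^ 2 - 2 * a * b * c) ^ q := by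
    have hab : 2 * a * b ≤ a ^ 2 + b ^ 2 := by nlinarith [sq_nonneg (a - b)]
    have := hconc.map_add_add_map_sub_le (s := a ^ 2 + b ^ 2) (d := 2 * a * b * c)
      (d' := (a ^ 2 + b ^ 2) * c) (by simp only [Set.mem_Ici]; nlinarith)
      (by simp only [Set.mem_Ici]; nlinarith)
      (by rw [abs_mul, abs_mul (a ^ 2 + b ^ 2), abs_of_nonneg hs, abs_of_nonneg (by positivity)]
          exact mul_le_mul_of_nonneg_right hab (abs_nonneg c))
    simpa only [mul_add, mul_sub, mul_one] using this
  calc ((a ^ 2) ^ q + (b ^ 2) ^ q) * ((2 + 2 * c) ^ q + (2 - 2 * c) ^ q)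
      = ((a ^ 2) ^ q + (b ^ 2) ^ q) * (2 ^ q * ((1 + c) ^ q + (1 - c) ^ q)) := by
        rw [show 2 + 2 * c = 2 * (1 + c) by ring, show 2 - 2 * c = 2 * (1 - c) by ring,
          Real.mul_rpow zero_le_two (by linarith), Real.mul_rpow zero_le_two (by linarith)]
        ring
    _ ≤ 2 * ((a ^ 2 + b ^ 2) / 2) ^ q * (2 ^ q * ((1 + c) ^ q + (1 - c) ^ q)) := by
        gcongr
        have := Real.rpow_nonneg (by linarith : 0 ≤ 1 + c) q
        have := Real.rpow_nonneg (by linarith : 0 ≤ 1 - c) q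
        positivity
    _ = 2 * (((a ^ 2 + b ^ 2) * (1 + c)) ^ q + ((a ^ 2 + b ^ 2) * (1 - c)) ^ q) := by
        rw [Real.div_rpow hs zero_le_two, Real.mul_rpow hs (by linarith),
          Real.mul_rpow hs (by linarith)]
        field_simp
    _ ≤ _ := by gcongr

theorem sq_norm_ofReal_add_ofReal_mul (a b : ℝ) {w : ℂ} (hw : ‖w‖ = 1) :
    ‖(a : ℂ) + b * w‖ ^ 2 = a ^ 2 + b ^ 2 + 2 * a * b * w.re := by
  have hw' : w.re ^ 2 + w.im ^ 2 = 1 := by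
    have := Complex.sq_norm w
    rw [hw, Complex.normSq_apply] at this
    linear_combination -this
  rw [Complex.sq_norm, Complex.normSq_apply]
  simp only [Complex.add_re, Complex.add_im, Complex.mul_re, Complex.mul_im, Complex.ofReal_re,
    Complex.ofReal_im]
  linear_combination b ^ 2 * hw'

theorem rpow_add_rpow_mul_le_of_norm_eq_one {p a b : ℝ} (hp₀ : 0 < p) (hp₂ : p ≤ 2) (ha : 0 ≤ a)
    (hb : 0 ≤ b) {w : ℂ} (hw : ‖w‖ = 1) :
    (a ^ p + b ^ p) * (‖1 + w‖ ^ p + ‖1 - w‖ ^ p)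
      ≤ 2 * (‖(a : ℂ) + b * w‖ ^ p + ‖(a : ℂ) - b * w‖ ^ p) := by
  have hsq : ∀ x : ℝ, 0 ≤ x → x ^ p = (x ^ 2) ^ (p / 2) := fun x hx => by
    rw [← Real.rpow_natCast, ← Real.rpow_mul hx]
    ring_nf
  have hplus := sq_norm_ofReal_add_ofReal_mul a b hw
  have hminus := sq_norm_ofReal_add_ofReal_mul a (-b) hw
  have hone_plus := sq_norm_ofReal_add_ofReal_mul 1 1 hw
  have hone_minus := sq_norm_ofReal_add_ofReal_mul 1 (-1) hw
  push_cast [neg_mul, ← sub_eq_add_neg, one_mul] at hminus hone_plus hone_minus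
  rw [hsq a ha, hsq b hb, hsq ‖1 + w‖ (norm_nonneg _), hsq ‖1 - w‖ (norm_nonneg _),
    hsq ‖(a : ℂ) + b * w‖ (norm_nonneg _), hsq ‖(a : ℂ) - b * w‖ (norm_nonneg _), hplus, hminus,
    hone_plus, hone_minus]
  have hreal := sq_rpow_add_sq_rpow_mul_le (by linarith : 0 < p / 2) (by linarith) ha hb
    (Complex.abs_re_le_norm w |>.trans hw.le)
  convert hreal using 4 <;> ring

theorem continuous_norm_rpow {p : ℝ} (hp : 0 ≤ p) {f : ℝ → ℂ} (hf : Continuous f) :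
    Continuous fun t => ‖f t‖ ^ p :=
  hf.norm.rpow_const fun _ => Or.inr hp

theorem half_intervalIntegral_norm_one_sub_e_rpow_mul_le {p a b : ℝ} (hp₀ : 0 < p) (hp₂ : p ≤ 2)
    (ha : 0 ≤ a) (hb : 0 ≤ b) :
    1 / 2 * (∫ t in (0 : ℝ)..1, ‖1 - e t‖ ^ p) * (a ^ p + b ^ p)
      ≤ ∫ t in (0 : ℝ)..1, ‖(a : ℂ) + b * e t‖ ^ p := by
  have hint : ∀ f : ℝ → ℂ, Continuous f →
      IntervalIntegrable (fun t => ‖f t‖ ^ p) volume 0 1 := fun f hf =>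
    (continuous_norm_rpow hp₀.le hf).intervalIntegrable 0 1
  have hsymm₁ : ∫ t in (0 : ℝ)..1, ‖1 - e t‖ ^ p = ∫ t in (0 : ℝ)..1, ‖1 + e t‖ ^ p := by
    simpa only [← sub_eq_add_neg] using intervalIntegral_comp_neg_e (fun z => ‖1 + z‖ ^ p)
  have hsymm₂ : ∫ t in (0 : ℝ)..1, ‖(a : ℂ) - b * e t‖ ^ p
      = ∫ t in (0 : ℝ)..1, ‖(a : ℂ) + b * e t‖ ^ p := by
    simpa only [mul_neg, ← sub_eq_add_neg] using
      intervalIntegral_comp_neg_e (fun z => ‖(a : ℂ) + b * z‖ ^ p)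
  have hmono := intervalIntegral.integral_mono_on zero_le_one
    (((hint _ (by fun_prop)).add (hint _ (by fun_prop))).const_mul (a ^ p + b ^ p))
    (((hint _ (by fun_prop)).add (hint _ (by fun_prop))).const_mul 2)
    fun t _ => rpow_add_rpow_mul_le_of_norm_eq_one hp₀ hp₂ ha hb (norm_e t)
  rw [intervalIntegral.integral_const_mul, intervalIntegral.integral_const_mul,
    intervalIntegral.integral_add (hint _ (by fun_prop)) (hint _ (by fun_prop)),
    intervalIntegral.integral_add (hint _ (by fun_prop)) (hint _ (by fun_prop)),
    ← hsymm₁, hsymm₂] at hmono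
  linarith

theorem intervalIntegral_norm_add_mul_e_rpow (α β : ℂ) (p : ℝ) :
    ∫ t in (0 : ℝ)..1, ‖α + β * e t‖ ^ p
      = ∫ t in (0 : ℝ)..1, ‖(‖α‖ : ℂ) + ‖β‖ * e t‖ ^ p := by
  set θα := α.arg / (2 * Real.pi)
  set θβ := β.arg / (2 * Real.pi)
  have hrot (t : ℝ) : ‖α + β * e t‖ = ‖(‖α‖ : ℂ) + ‖β‖ * e (t + (θβ - θα))‖ := by
    have hphase : e θα * e (t + (θβ - θα)) = e θβ * e t := by
      rw [← e_add, ← e_add]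
      ring_nf
    have : α + β * e t = e θα * (‖α‖ + ‖β‖ * e (t + (θβ - θα))) := by
      conv_lhs => rw [← norm_mul_e_arg α, ← norm_mul_e_arg β]
      linear_combination (‖β‖ : ℂ) * hphase.symm
    rw [this, norm_mul, norm_e, one_mul]
  simp_rw [hrot]
  exact (e_periodic.comp fun z => ‖(‖α‖ : ℂ) + ‖β‖ * z‖ ^ p).intervalIntegral_comp_add_right _

theorem intervalIntegral_norm_eval_binomial_rpow {L M : ℕ} (hLM : L < M) (α β : ℂ) {p : ℝ}
    (hp : 0 ≤ p) :
    ∫ t in (0 : ℝ)..1, ‖(C α * X ^ L + C β * X ^ M).eval (e t)‖ ^ p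
      = ∫ t in (0 : ℝ)..1, ‖α + β * e t‖ ^ p := by
  obtain ⟨k, rfl⟩ : ∃ k, M = L + k := ⟨M - L, by omega⟩
  have heval (t : ℝ) : ‖(C α * X ^ L + C β * X ^ (L + k)).eval (e t)‖ = ‖α + β * e (k * t)‖ := by
    rw [eval_add, eval_mul, eval_mul, eval_C, eval_C, eval_pow, eval_pow, eval_X, pow_add,
      e_natCast_mul,
      show α * e t ^ L + β * (e t ^ L * e t ^ k) = e t ^ L * (α + β * e t ^ k) by ring,
      norm_mul, norm_pow, norm_e, one_pow, one_mul]
  simp_rw [heval]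
  exact (e_periodic.comp fun z => ‖α + β * z‖ ^ p).intervalIntegral_comp_natCast_mul
    (fun _ _ => (continuous_norm_rpow hp (by fun_prop)).intervalIntegrable _ _) (by omega)

theorem binomial_Lp_lower_bound_two (L M : ℕ) (hLM : L < M) (α β : ℂ)
    (p : ℝ) (hp0 : 0 < p) (hp2 : p ≤ 2) :
    polyLp p (Polynomial.C α * Polynomial.X ^ L + Polynomial.C β * Polynomial.X ^ M) ≥
      Bp p * (‖α‖ ^ p + ‖β‖ ^ p) ^ (1/p) := by
  have hBp : 0 ≤ (1 / 2) * ∫ t in (0 : ℝ)..1, ‖1 - e t‖ ^ p :=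
    mul_nonneg (by norm_num) (intervalIntegral.integral_nonneg zero_le_one fun t _ => by positivity)
  unfold polyLp Bp
  rw [intervalIntegral_norm_eval_binomial_rpow hLM α β hp0.le,
    intervalIntegral_norm_add_mul_e_rpow, ← Real.mul_rpow hBp (by positivity)]
  exact Real.rpow_le_rpow (by positivity)
    (half_intervalIntegral_norm_one_sub_e_rpow_mul_le hp0 hp2 (norm_nonneg α) (norm_nonneg β))
    (by positivity)
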